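/- Suppose for real sequences: a ≤ 1 ≤ b and for all primes p, a ≤ E[X_p²] ≤ b, where X_p are independent mean-zero random variables and θ_ℓ = ∏_{p|ℓ}X_p for squarefree ℓ (0 otherwise). Then there exist constants c, C₁, C₂ > 0 such that for all sufficiently large n: C₁ · n^{1 − c|ln a|/ln ln n} ≤ E[(∑_{ℓ=1}^n θ_ℓ)²] ≤ C₂ · n^{1 + c·(ln b)/ln ln n}. -/

import Mathlib

open MeasureTheory ProbabilityTheory Finset
open scoped Nat

/-! For squarefree `ℓ ≠ m` some prime `p` divides exactly one of them, and by independence the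
mean-zero factor `X_p` splits off `E[θ_ℓ θ_m]`; so the `θ_ℓ` are orthogonal and
`E[S_n²] = ∑_{ℓ ≤ n squarefree} ∏_{p ∣ ℓ} E[X_p²]`, each term lying between `a^ω(ℓ)` and `b^ω(ℓ)`.
Since `ω(ℓ)! ≤ ℓ` and `k! ≥ (k/e)^k`, every `ℓ ≤ n` has `ω(ℓ) ≤ 3 log n / log log n`, and
`a^(3 log n / log log n) = n^(-3 |log a| / log log n)`. Finally at least `n / 12` of the integers
up to `n` are squarefree, since at most `n/4 + n ∑_{m ≥ 3} m⁻² ≤ 11n/12` are divisible by a square. -/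

theorem Finset.prod_mul_prod_eq_prod_union_pow {ι M : Type*} [DecidableEq ι] [CommMonoid M]
    (s t : Finset ι) (f : ι → M) :
    (∏ i ∈ s, f i) * ∏ i ∈ t, f i = ∏ i ∈ s ∪ t, f i ^ (if i ∈ s ∩ t then 2 else 1) := by
  have hinter : (s ∪ t) ∩ (s ∩ t) = s ∩ t := inter_eq_right.2 inter_subset_union
  rw [← prod_union_inter, ← hinter, ← prod_ite_mem, hinter, ← prod_mul_distrib]
  refine prod_congr rfl fun i _ => ?_
  split_ifs <;> simp [pow_two]

section Independence

variable {Ω ι : Type*} [MeasurableSpace Ω] {μ : Measure Ω} {X : ι → Ω → ℝ}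

theorem ProbabilityTheory.iIndepFun.integrable_finset_prod (hX : iIndepFun X μ)
    (hmeas : ∀ i, Measurable (X i)) {s : Finset ι} (hint : ∀ i ∈ s, Integrable (X i) μ) :
    Integrable (fun ω => ∏ i ∈ s, X i ω) μ := by
  classical
  have := hX.isProbabilityMeasure
  induction s using Finset.induction_on with
  | empty => simp
  | insert i s hi ih =>
    simp only [prod_insert hi]
    have hindep := (hX.indepFun_finsetProd_of_notMem hmeas hi).symm
    simp only [forall_mem_insert] at hint
    have := hindep.integrable_mul hint.1 (by rw [prod_fn]; exact ih hint.2)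
    rwa [prod_fn] at this

theorem ProbabilityTheory.iIndepFun.integral_finset_prod (hX : iIndepFun X μ)
    (hmeas : ∀ i, Measurable (X i)) (s : Finset ι) :
    ∫ ω, ∏ i ∈ s, X i ω ∂μ = ∏ i ∈ s, ∫ ω, X i ω ∂μ := by
  have hXs : iIndepFun (fun i : s => X i) μ := hX.precomp Subtype.val_injective
  rw [← prod_coe_sort s]
  simp_rw [← prod_coe_sort s]
  exact hXs.integral_fun_prod_eq_prod_integral (fun i => (hmeas i).aestronglyMeasurable)

theorem ProbabilityTheory.iIndepFun.memLp_two_finset_prod (hX : iIndepFun X μ)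
    (hmeas : ∀ i, Measurable (X i)) {s : Finset ι} (hL2 : ∀ i ∈ s, MemLp (X i) 2 μ) :
    MemLp (fun ω => ∏ i ∈ s, X i ω) 2 μ := by
  have hX2 : iIndepFun (fun i ω => X i ω ^ 2) μ :=
    hX.comp (fun _ x => x ^ 2) (fun _ => measurable_id.pow_const 2)
  refine (memLp_two_iff_integrable_sq (by fun_prop)).2 ?_
  simpa only [prod_pow] using
    hX2.integrable_finset_prod (fun i => (hmeas i).pow_const 2) fun i hi => (hL2 i hi).integrable_sq

theorem ProbabilityTheory.iIndepFun.integral_prod_mul_prod [DecidableEq ι] (hX : iIndepFun X μ)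
    (hmeas : ∀ i, Measurable (X i)) {s t : Finset ι} (hmean : ∀ i ∈ s ∪ t, ∫ ω, X i ω ∂μ = 0) :
    ∫ ω, (∏ i ∈ s, X i ω) * ∏ i ∈ t, X i ω ∂μ =
      if s = t then ∏ i ∈ s, ∫ ω, X i ω ^ 2 ∂μ else 0 := by
  set k : ι → ℕ := fun i => if i ∈ s ∩ t then 2 else 1
  have hXk : iIndepFun (fun i ω => X i ω ^ k i) μ :=
    hX.comp (fun i x => x ^ k i) (fun i => measurable_id.pow_const _)
  simp_rw [prod_mul_prod_eq_prod_union_pow]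
  rw [hXk.integral_finset_prod (fun i => (hmeas i).pow_const _)]
  split_ifs with hst
  · subst hst
    simp only [union_self]
    exact prod_congr rfl fun i hi => by simp [k, hi]
  · obtain ⟨i, hi⟩ := symmDiff_nonempty.2 hst
    rw [symmDiff_eq_sup_sdiff_inf, mem_sdiff] at hi
    exact prod_eq_zero hi.1 (by simpa [show k i = 1 from if_neg hi.2] using hmean i hi.1)

theorem integral_sq_finset_sum_of_orthogonal {f : ι → Ω → ℝ} {s : Finset ι}
    (hf : ∀ i ∈ s, MemLp (f i) 2 μ)
    (horth : ∀ i ∈ s, ∀ j ∈ s, i ≠ j → ∫ ω, f i ω * f j ω ∂μ = 0) :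
    ∫ ω, (∑ i ∈ s, f i ω) ^ 2 ∂μ = ∑ i ∈ s, ∫ ω, f i ω ^ 2 ∂μ := by
  have hint : ∀ i ∈ s, ∀ j ∈ s, Integrable (fun ω => f i ω * f j ω) μ :=
    fun i hi j hj => (hf i hi).integrable_mul (hf j hj)
  simp_rw [sq, sum_mul_sum]
  rw [integral_finsetSum _ fun i hi => integrable_finsetSum _ fun j hj => hint i hi j hj]
  refine sum_congr rfl fun i hi => ?_
  rw [integral_finsetSum _ fun j hj => hint i hi j hj,
    sum_eq_single i (fun j hj hji => horth i hi j hj hji.symm) (fun h => absurd hi h)]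

end Independence

section Squarefree

variable {Ω : Type*} [MeasurableSpace Ω] {μ : Measure Ω} {X : ℕ → Ω → ℝ}

theorem integral_sq_sum_prod_primeFactors (hX : iIndepFun X μ) (hmeas : ∀ p, Measurable (X p))
    (hL2 : ∀ p : ℕ, p.Prime → MemLp (X p) 2 μ) (hmean : ∀ p : ℕ, p.Prime → ∫ ω, X p ω ∂μ = 0)
    {S : Finset ℕ} (hS : ∀ ℓ ∈ S, Squarefree ℓ) :
    ∫ ω, (∑ ℓ ∈ S, ∏ p ∈ ℓ.primeFactors, X p ω) ^ 2 ∂μ =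
      ∑ ℓ ∈ S, ∏ p ∈ ℓ.primeFactors, ∫ ω, X p ω ^ 2 ∂μ := by
  have hmean' (ℓ m : ℕ) : ∀ p ∈ ℓ.primeFactors ∪ m.primeFactors, ∫ ω, X p ω ∂μ = 0 := by
    intro p hp
    rcases mem_union.1 hp with h | h <;> exact hmean p (Nat.prime_of_mem_primeFactors h)
  have hL2' (ℓ : ℕ) : MemLp (fun ω => ∏ p ∈ ℓ.primeFactors, X p ω) 2 μ :=
    hX.memLp_two_finset_prod hmeas fun p hp => hL2 p (Nat.prime_of_mem_primeFactors hp)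
  rw [integral_sq_finset_sum_of_orthogonal (fun ℓ _ => hL2' ℓ)]
  · refine sum_congr rfl fun ℓ _ => ?_
    simpa [sq] using hX.integral_prod_mul_prod hmeas (hmean' ℓ ℓ)
  · intro ℓ hℓ m hm hne
    rw [hX.integral_prod_mul_prod hmeas (hmean' ℓ m), if_neg]
    intro h
    rw [← Nat.prod_primeFactors_of_squarefree (hS ℓ hℓ), h,
      Nat.prod_primeFactors_of_squarefree (hS m hm)] at hne
    exact hne rfl

end Squarefree

theorem Finset.factorial_card_le_prod {s : Finset ℕ} (hs : 0 ∉ s) : s.card ! ≤ ∏ i ∈ s, i := by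
  induction s using induction_on_max with
  | empty => simp
  | insert a s hlt ih =>
    have has : a ∉ s := fun h => lt_irrefl a (hlt a h)
    have hpos : ∀ x ∈ s, 0 < x := fun x hx => Nat.pos_of_ne_zero fun h => hs (h ▸ mem_insert_of_mem hx)
    have hcard : s.card + 1 ≤ a := by
      have := card_le_card fun x hx => mem_Ioo.2 ⟨hpos x hx, hlt x hx⟩
      rw [Nat.card_Ioo] at this
      have : 0 < a := Nat.pos_of_ne_zero fun h => hs (h ▸ mem_insert_self a s)
      omega
    rw [card_insert_of_notMem has, prod_insert has, Nat.factorial_succ]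
    exact Nat.mul_le_mul hcard (ih fun h => hs (mem_insert_of_mem h))

theorem Nat.factorial_card_primeFactors_le {n : ℕ} (hn : n ≠ 0) : n.primeFactors.card ! ≤ n :=
  (factorial_card_le_prod fun h => Nat.not_prime_zero (Nat.prime_of_mem_primeFactors h)).trans
    (Nat.le_of_dvd (Nat.pos_of_ne_zero hn) (Nat.prod_primeFactors_dvd n))

theorem Real.mul_log_sub_one_le_log_of_factorial_le {n k : ℕ} (hk : k ! ≤ n) :
    (k : ℝ) * (Real.log k - 1) ≤ Real.log n := by
  rcases k.eq_zero_or_pos with rfl | hk0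
  · simpa using Real.log_natCast_nonneg n
  have hpow : (k : ℝ) ^ k ≤ Real.exp k * n := by
    have := Real.pow_div_factorial_le_exp _ (Nat.cast_nonneg k) k
    rw [div_le_iff₀ (by positivity)] at this
    calc (k : ℝ) ^ k ≤ Real.exp k * k ! := this
      _ ≤ Real.exp k * n := by gcongr
  have hn : (n : ℝ) ≠ 0 := by exact_mod_cast (Nat.factorial_pos k).trans_le hk |>.ne'
  have := Real.log_le_log (by positivity) hpow
  rw [Real.log_pow, Real.log_mul (Real.exp_pos _).ne' hn, Real.log_exp] at this
  linarith

theorem Real.log_le_two_thirds_mul {y : ℝ} (hy : 0 < y) : Real.log y ≤ 2 * y / 3 := by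
  have h := Real.log_le_sub_one_of_pos (div_pos hy (Real.exp_pos 1))
  rw [Real.log_div hy.ne' (Real.exp_pos 1).ne', Real.log_exp] at h
  have he : (3 : ℝ) / 2 ≤ Real.exp 1 := by linarith [Real.exp_one_gt_d9]
  have : y / Real.exp 1 ≤ 2 * y / 3 := by
    rw [div_le_iff₀ (Real.exp_pos 1)]; nlinarith
  linarith

theorem Nat.cast_le_log_div_log_log_of_factorial_le {n k : ℕ} (hn : 3 ≤ n) (hk : k ! ≤ n) :
    (k : ℝ) ≤ 3 * Real.log n / Real.log (Real.log n) := by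
  set y := Real.log (Real.log n)
  set K := 3 * Real.log n / y
  have hlog3 : 1 < Real.log 3 := by
    rw [Real.lt_log_iff_exp_lt (by norm_num)]; linarith [Real.exp_one_lt_d9]
  have hlogn : 1 < Real.log n :=
    hlog3.trans_le (Real.log_le_log (by norm_num) (by exact_mod_cast hn))
  have hy : 0 < y := Real.log_pos hlogn
  have hK : 0 < K := by positivity
  have hlogK : Real.log K = Real.log 3 + y - Real.log y := by
    rw [Real.log_div (by positivity) hy.ne', Real.log_mul (by norm_num) (by positivity)]
  have hKlog : Real.log n ≤ K * (Real.log K - 1) :=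
    calc Real.log n ≤ 3 * Real.log n * (y - Real.log y) / y := by
          rw [le_div_iff₀ hy]; nlinarith [Real.log_le_two_thirds_mul hy]
      _ = K * (y - Real.log y) := by ring
      _ ≤ K * (Real.log K - 1) := by rw [hlogK]; exact mul_le_mul_of_nonneg_left (by linarith) hK.le
  -- `x (log x - 1)` increases and already exceeds `log n` at `x = K`
  by_contra! hKk
  have hlog : Real.log K < Real.log k := Real.log_lt_log hK hKk
  have : K * (Real.log K - 1) < k * (Real.log k - 1) := by
    have : 0 < Real.log K - 1 := by
      by_contra! h; nlinarith
    exact mul_lt_mul hKk (by linarith) this (by linarith)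
  linarith [Real.mul_log_sub_one_le_log_of_factorial_le hk]

theorem Nat.card_primeFactors_le_log_div_log_log {ℓ n : ℕ} (hn : 3 ≤ n) (hℓ : ℓ ≠ 0)
    (hℓn : ℓ ≤ n) : (ℓ.primeFactors.card : ℝ) ≤ 3 * Real.log n / Real.log (Real.log n) :=
  Nat.cast_le_log_div_log_log_of_factorial_le hn ((Nat.factorial_card_primeFactors_le hℓ).trans hℓn)

theorem card_filter_squarefree_Icc_ge (n : ℕ) :
    (n : ℝ) / 12 ≤ ((Icc 1 n).filter Squarefree).card := by
  set M : ℕ → Finset ℕ := fun d => (Icc 1 n).filter (d ∣ ·)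
  set T := (Icc 1 n).filter (¬ Squarefree ·)
  have hM (d : ℕ) : ((M d).card : ℝ) ≤ n / d := by
    simp only [M, show Icc 1 n = Ioc 0 n from rfl, Nat.Ioc_filter_dvd_card_eq_div]
    exact Nat.cast_div_le
  have hT : T ⊆ M (2 ^ 2) ∪ (Ioo 2 (n + 1)).biUnion fun m => M (m ^ 2) := by
    intro ℓ hℓ
    obtain ⟨hℓn, hsf⟩ := mem_filter.1 hℓ
    obtain ⟨p, hp, hpℓ⟩ : ∃ p, p.Prime ∧ p * p ∣ ℓ := by
      simpa [Nat.squarefree_iff_prime_squarefree] using hsf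
    have hpℓ' : p ^ 2 ∣ ℓ := by rwa [sq]
    rcases hp.two_le.eq_or_lt with rfl | hp2
    · exact mem_union_left _ (mem_filter.2 ⟨hℓn, hpℓ'⟩)
    · refine mem_union_right _ (mem_biUnion.2 ⟨p, ?_, mem_filter.2 ⟨hℓn, hpℓ'⟩⟩)
      have := Nat.le_of_dvd (by simp at hℓn; omega) hpℓ
      simp only [mem_Icc] at hℓn
      simp only [mem_Ioo]
      constructor <;> nlinarith
  have hTcard : (T.card : ℝ) ≤ 11 * n / 12 :=
    calc (T.card : ℝ) ≤ (M (2 ^ 2)).card + ∑ m ∈ Ioo 2 (n + 1), ((M (m ^ 2)).card : ℝ) := by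
          exact_mod_cast (card_le_card hT).trans
            ((card_union_le _ _).trans (Nat.add_le_add_left card_biUnion_le _))
      _ ≤ n / 2 ^ 2 + ∑ m ∈ Ioo 2 (n + 1), (n : ℝ) / m ^ 2 := by
          gcongr <;> exact_mod_cast hM _
      _ = n / 4 + n * ∑ m ∈ Ioo 2 (n + 1), ((m : ℝ) ^ 2)⁻¹ := by
          rw [mul_sum]; norm_num [div_eq_mul_inv]
      _ ≤ n / 4 + n * (2 / (2 + 1)) := by
          gcongr; exact_mod_cast sum_Ioo_inv_sq_le 2 (n + 1)
      _ = 11 * n / 12 := by ring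
  have hsplit : ((Icc 1 n).filter Squarefree).card + T.card = n := by
    rw [card_filter_add_card_filter_not, Nat.card_Icc, Nat.add_sub_cancel]
  have : (((Icc 1 n).filter Squarefree).card : ℝ) + T.card = n := by exact_mod_cast hsplit
  linarith

theorem Real.rpow_one_add_mul_log_div {x z : ℝ} (hx : 0 < x) (hz : 0 < z) (c d : ℝ) :
    x ^ (1 + c * Real.log z / d) = x * z ^ (c * Real.log x / d) := by
  rw [Real.rpow_add hx, Real.rpow_one, Real.rpow_def_of_pos hx, Real.rpow_def_of_pos hz]
  ring_nf

theorem Finset.rpow_le_prod_of_card_le {ι : Type*} {s : Finset ι} {f : ι → ℝ} {a K : ℝ}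
    (ha : 0 < a) (ha1 : a ≤ 1) (hf : ∀ i ∈ s, a ≤ f i) (hK : (s.card : ℝ) ≤ K) :
    a ^ K ≤ ∏ i ∈ s, f i :=
  calc a ^ K ≤ a ^ (s.card : ℝ) := Real.rpow_le_rpow_of_exponent_ge ha ha1 hK
    _ = ∏ _i ∈ s, a := by rw [Real.rpow_natCast, prod_const]
    _ ≤ ∏ i ∈ s, f i := prod_le_prod (fun _ _ => ha.le) hf

theorem Finset.prod_le_rpow_of_card_le {ι : Type*} {s : Finset ι} {f : ι → ℝ} {b K : ℝ}
    (hb : 1 ≤ b) (hf0 : ∀ i ∈ s, 0 ≤ f i) (hf : ∀ i ∈ s, f i ≤ b) (hK : (s.card : ℝ) ≤ K) :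
    ∏ i ∈ s, f i ≤ b ^ K :=
  calc ∏ i ∈ s, f i ≤ ∏ _i ∈ s, b := prod_le_prod hf0 hf
    _ = b ^ (s.card : ℝ) := by rw [Real.rpow_natCast, prod_const]
    _ ≤ b ^ K := Real.rpow_le_rpow_of_exponent_le hb hK

theorem variance_Sn_almost_linear_general
    {Ω : Type*} [MeasurableSpace Ω] (μ : Measure Ω)
    (X : ℕ → Ω → ℝ) (hmeas : ∀ p, Measurable (X p))
    (hind : iIndepFun X μ)
    (hL2 : ∀ p : ℕ, p.Prime → MemLp (X p) 2 μ)
    (hmean : ∀ p : ℕ, p.Prime → ∫ ω, X p ω ∂μ = 0)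
    (a b : ℝ) (ha : 0 < a) (hab : a ≤ 1 ∧ 1 ≤ b)
    (hvar : ∀ p : ℕ, p.Prime → a ≤ ∫ ω, (X p ω) ^ 2 ∂μ ∧ ∫ ω, (X p ω) ^ 2 ∂μ ≤ b)
    (θ : ℕ → Ω → ℝ)
    (hθ : ∀ ℓ : ℕ, θ ℓ =
      if Squarefree ℓ then (fun ω => ∏ p ∈ ℓ.primeFactors, X p ω) else 0) :
    ∃ c > 0, ∃ C₁ > 0, ∃ C₂ > 0, ∃ N : ℕ, ∀ n : ℕ, N ≤ n →
      C₁ * (n : ℝ) ^ (1 - c * |Real.log a| / Real.log (Real.log n)) ≤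
        ∫ ω, (∑ ℓ ∈ Finset.Icc 1 n, θ ℓ ω) ^ 2 ∂μ ∧
      ∫ ω, (∑ ℓ ∈ Finset.Icc 1 n, θ ℓ ω) ^ 2 ∂μ ≤
        C₂ * (n : ℝ) ^ (1 + c * Real.log b / Real.log (Real.log n)) := by
  refine ⟨3, by norm_num, 1 / 12, by norm_num, 1, one_pos, 3, fun n hn => ?_⟩
  set S := (Icc 1 n).filter Squarefree
  set K := 3 * Real.log n / Real.log (Real.log n)
  have hn0 : (0 : ℝ) < n := by positivity
  have hω (ℓ : ℕ) (hℓ : ℓ ∈ S) : (ℓ.primeFactors.card : ℝ) ≤ K := by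
    obtain ⟨h1, hℓn⟩ := mem_Icc.1 (mem_filter.1 hℓ).1
    exact Nat.card_primeFactors_le_log_div_log_log hn (by omega) hℓn
  have hvar' (ℓ : ℕ) (p : ℕ) (hp : p ∈ ℓ.primeFactors) := hvar p (Nat.prime_of_mem_primeFactors hp)
  have hsum (ω : Ω) : ∑ ℓ ∈ Icc 1 n, θ ℓ ω = ∑ ℓ ∈ S, ∏ p ∈ ℓ.primeFactors, X p ω := by
    rw [sum_filter]
    exact sum_congr rfl fun ℓ _ => by rw [hθ]; split_ifs <;> rfl
  simp_rw [hsum]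
  rw [integral_sq_sum_prod_primeFactors hind hmeas hL2 hmean fun ℓ hℓ => (mem_filter.1 hℓ).2]
  constructor
  · calc 1 / 12 * (n : ℝ) ^ (1 - 3 * |Real.log a| / Real.log (Real.log n)) = n / 12 * a ^ K := by
          rw [abs_of_nonpos (Real.log_nonpos ha.le hab.1), sub_eq_add_neg, ← neg_div, ← mul_neg,
            neg_neg, Real.rpow_one_add_mul_log_div hn0 ha]
          ring
      _ ≤ S.card * a ^ K := by gcongr; exact card_filter_squarefree_Icc_ge n
      _ ≤ _ := by
          rw [← nsmul_eq_mul]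
          exact card_nsmul_le_sum _ _ _ fun ℓ hℓ =>
            rpow_le_prod_of_card_le ha hab.1 (fun p hp => (hvar' ℓ p hp).1) (hω ℓ hℓ)
  · calc _ ≤ S.card * b ^ K := by
          rw [← nsmul_eq_mul]
          exact sum_le_card_nsmul _ _ _ fun ℓ hℓ =>
            prod_le_rpow_of_card_le hab.2 (fun _ _ => integral_nonneg fun _ => sq_nonneg _)
              (fun p hp => (hvar' ℓ p hp).2) (hω ℓ hℓ)
      _ ≤ n * b ^ K := by
          have : S.card ≤ n := (card_filter_le _ _).trans (by simp)
          gcongr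
          exact Real.rpow_nonneg (by linarith) K
      _ = 1 * (n : ℝ) ^ (1 + 3 * Real.log b / Real.log (Real.log n)) := by
          rw [Real.rpow_one_add_mul_log_div hn0 (by linarith)]
          ring

theorem variance_Sn_almost_linear
    {Ω : Type*} [MeasurableSpace Ω] (μ : Measure Ω) [IsProbabilityMeasure μ]
    (X : ℕ → Ω → ℝ) (hmeas : ∀ p, Measurable (X p))
    (hind : iIndepFun X μ)
    (hL2 : ∀ p : ℕ, p.Prime → MemLp (X p) 2 μ)
    (hmean : ∀ p : ℕ, p.Prime → ∫ ω, X p ω ∂μ = 0)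
    (a b : ℝ) (ha : 0 < a) (hab : a ≤ 1 ∧ 1 ≤ b)
    (hvar : ∀ p : ℕ, p.Prime → a ≤ ∫ ω, (X p ω) ^ 2 ∂μ ∧ ∫ ω, (X p ω) ^ 2 ∂μ ≤ b)
    (θ : ℕ → Ω → ℝ)
    (hθ : ∀ ℓ : ℕ, θ ℓ =
      if Squarefree ℓ then (fun ω => ∏ p ∈ ℓ.primeFactors, X p ω) else 0) :
    ∃ c > 0, ∃ C₁ > 0, ∃ C₂ > 0, ∃ N : ℕ, ∀ n : ℕ, N ≤ n →
      C₁ * (n : ℝ) ^ (1 - c * |Real.log a| / Real.log (Real.log n)) ≤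
        ∫ ω, (∑ ℓ ∈ Finset.Icc 1 n, θ ℓ ω) ^ 2 ∂μ ∧
      ∫ ω, (∑ ℓ ∈ Finset.Icc 1 n, θ ℓ ω) ^ 2 ∂μ ≤
        C₂ * (n : ℝ) ^ (1 + c * Real.log b / Real.log (Real.log n)) :=
  variance_Sn_almost_linear_general μ X hmeas hind hL2 hmean a b ha hab hvar θ hθ
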